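/- In any binary tree, during a preorder (depth-first) traversal, the nodes of any subtree obtained by pruning at most two disjoint subtrees from a rooted subtree are visited in at most three contiguous ranges of preorder indices. -/

import Mathlib

open Filter Real

/-- Binary trees: empty (`leaf`) or a node with left and right subtrees. -/
inductive BinTree where
  | leaf : BinTree
  | node : BinTree → BinTree → BinTree
deriving DecidableEq, Repr

namespace BinTree

/-- Number of nodes. -/
def size : BinTree → ℕ
  | leaf => 0
  | node l r => l.size + r.size + 1

/-- Product of subtree sizes over all nodes: `∏_{v∈t} st(v)`. -/
def stProd : BinTree → ℕ
  | leaf => 1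
  | node l r => (node l r).size * l.stProd * r.stProd

/-- Subtree-size entropy: `H_st(t) = ∑_{v∈t} lg st(v)`. -/
noncomputable def stEntropy : BinTree → ℝ
  | leaf => 0
  | node l r => Real.logb 2 ((node l r).size : ℝ) + l.stEntropy + r.stEntropy

/-- Size of the left subtree of the root. -/
def leftSize : BinTree → ℕ
  | leaf => 0
  | node l _ => l.size

/-- Every node has at most one (nonempty) child. -/
def isPath : BinTree → Prop
  | leaf => True
  | node l r => (l = leaf ∨ r = leaf) ∧ l.isPath ∧ r.isPath

/-- At every node the sizes of the two subtrees differ by at most 1. -/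
def isBalanced : BinTree → Prop
  | leaf => True
  | node l r => ((l.size : ℤ) - (r.size : ℤ)).natAbs ≤ 1 ∧ l.isBalanced ∧ r.isBalanced

/-- Number of leaves (nodes with no children). -/
def leafCount : BinTree → ℕ
  | leaf => 0
  | node l r => (if l = leaf ∧ r = leaf then 1 else 0) + l.leafCount + r.leafCount

/-- Number of binary nodes (both children present). -/
def binCount : BinTree → ℕ
  | leaf => 0
  | node l r => (if l ≠ leaf ∧ r ≠ leaf then 1 else 0) + l.binCount + r.binCount

/-- Number of nodes with only a left child. -/
def leftOnlyCount : BinTree → ℕ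
  | leaf => 0
  | node l r => (if l ≠ leaf ∧ r = leaf then 1 else 0) + l.leftOnlyCount + r.leftOnlyCount

/-- Number of nodes with only a right child. -/
def rightOnlyCount : BinTree → ℕ
  | leaf => 0
  | node l r => (if l = leaf ∧ r ≠ leaf then 1 else 0) + l.rightOnlyCount + r.rightOnlyCount

end BinTree

/-- Cartesian tree construction with explicit fuel (fuel ≥ length suffices). -/
def cartesianAux : ℕ → List ℕ → BinTree
  | 0, _ => .leaf
  | _ + 1, [] => .leaf
  | fuel + 1, x :: xs =>
      let m := List.foldl min x xs
      let i := (x :: xs).idxOf m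
      .node (cartesianAux fuel ((x :: xs).take i)) (cartesianAux fuel ((x :: xs).drop (i + 1)))

/-- The Cartesian tree of a list: root at the (first) minimum, left/right
subtrees built recursively from the prefix/suffix. -/
def cartesian (l : List ℕ) : BinTree := cartesianAux l.length l

/-- The array `A[1..n]` (as a list) associated with a permutation of `Fin n`. -/
def permList {n : ℕ} (p : Equiv.Perm (Fin n)) : List ℕ := List.ofFn fun k => (p k : ℕ)

/-- All binary trees with exactly `n` nodes. -/
def treesOfSize : ℕ → Finset BinTree
  | 0 => {BinTree.leaf}
  | n + 1 =>
    (Finset.range (n + 1)).attach.biUnion fun i =>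
      ((treesOfSize i.1) ×ˢ (treesOfSize (n - i.1))).image fun p => BinTree.node p.1 p.2
termination_by n => n
decreasing_by
  · exact Nat.lt_succ_of_le (Nat.le_of_lt_succ (Finset.mem_range.mp i.2))
  · exact Nat.lt_succ_of_le (Nat.sub_le n i.1)

/-- Shannon entropy (base 2) of the random-BST shape distribution on `n` nodes,
which assigns probability `1/stProd t` to each tree `t` on `n` nodes. -/
noncomputable def shapeEntropy (n : ℕ) : ℝ :=
  - ∑ t ∈ treesOfSize n, (1 / (t.stProd : ℝ)) * Real.logb 2 (1 / (t.stProd : ℝ))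

/-- Expectation of `f` under the random-BST shape distribution on `n` nodes. -/
noncomputable def expCount (f : BinTree → ℕ) (n : ℕ) : ℝ :=
  ∑ t ∈ treesOfSize n, (1 / (t.stProd : ℝ)) * (f t : ℝ)

/-- The entropy recurrence: `H 0 = H 1 = 0`, `H n = lg n + (2/n) ∑_{i<n} H i`. -/
noncomputable def Hrec : ℕ → ℝ
  | 0 => 0
  | 1 => 0
  | n + 2 =>
      Real.logb 2 ((n + 2 : ℕ) : ℝ) +
        (2 / ((n + 2 : ℕ) : ℝ)) * ∑ i ∈ (Finset.range (n + 2)).attach, Hrec i.1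
termination_by n => n
decreasing_by exact Finset.mem_range.mp i.2

/-- `rmq_A(i,j)` (1-based): the position of the (first) minimum of `A[i..j]`. -/
def rmqFun (A : List ℕ) (i j : ℕ) : ℕ :=
  let s := (A.drop (i - 1)).take (j - i + 1)
  i + s.idxOf (List.foldl min (s.headD 0) s)

/-- The inorder rank of the LCA of the nodes with inorder ranks `i` and `j`. -/
def lcaInorder : BinTree → ℕ → ℕ → ℕ
  | .leaf, _, _ => 0
  | .node l r, i, j =>
      let m := l.size + 1
      if i < m ∧ j < m then lcaInorder l i j
      else if m < i ∧ m < j then m + lcaInorder r (i - m) (j - m)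
      else m

/-- The subtree rooted at the node reached from the root by the given
left(`false`)/right(`true`) directions, if it exists. -/
def subAt : BinTree → List Bool → Option BinTree
  | t, [] => some t
  | .leaf, _ :: _ => none
  | .node l _, false :: p => subAt l p
  | .node _ r, true :: p => subAt r p

/-- Subtree size of the node at a position (0 if there is no node there). -/
def stAt (t : BinTree) (pos : List Bool) : ℕ := ((subAt t pos).getD .leaf).size

/-- Left-subtree size of the node at a position. -/
def lsAt (t : BinTree) (pos : List Bool) : ℕ := ((subAt t pos).getD .leaf).leftSize

/-- `Pruned μ s`: `μ` is obtained from `s` by replacing some subtrees by `leaf`. -/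
inductive Pruned : BinTree → BinTree → Prop
  | leaf (t) : Pruned .leaf t
  | node {l' r' l r} : Pruned l' l → Pruned r' r → Pruned (.node l' r') (.node l r)

/-- `PrunedN k μ s`: `μ` is obtained from `s` by pruning exactly `k` (nonempty) subtrees. -/
inductive PrunedN : ℕ → BinTree → BinTree → Prop
  | refl (t) : PrunedN 0 t t
  | prune (l r) : PrunedN 1 .leaf (.node l r)
  | node {a b l' r' l r} : PrunedN a l' l → PrunedN b r' r → PrunedN (a + b) (.node l' r') (.node l r)

/-- `IsSubtree s t`: `s` is the subtree of `t` rooted at some node (or `t` itself). -/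
inductive IsSubtree : BinTree → BinTree → Prop
  | refl (t) : IsSubtree t t
  | left {s l r} : IsSubtree s l → IsSubtree s (.node l r)
  | right {s l r} : IsSubtree s r → IsSubtree s (.node l r)

/-- `∑_{v∈μ} lg st_s(v)`: sum over the nodes of `μ` of the log-subtree-sizes
taken in the host tree `s` (for `μ` pruned from `s`). -/
noncomputable def mixedEntropy : BinTree → BinTree → ℝ
  | .leaf, _ => 0
  | .node _ _, .leaf => 0
  | .node l' r', .node l r =>
      Real.logb 2 ((BinTree.node l r).size : ℝ) + mixedEntropy l' l + mixedEntropy r' r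

/-- 1-based preorder index of the node at a position (0 if no node there). -/
def preorderIdx : BinTree → List Bool → ℕ
  | _, [] => 1
  | .leaf, _ :: _ => 0
  | .node l _, false :: p => 1 + preorderIdx l p
  | .node l r, true :: p => 1 + l.size + preorderIdx r p

/-- 1-based inorder index of the node at a position. -/
def inorderIdx : BinTree → List Bool → ℕ
  | t, [] => t.leftSize + 1
  | .leaf, _ :: _ => 0
  | .node l _, false :: p => inorderIdx l p
  | .node l r, true :: p => l.size + 1 + inorderIdx r p

/-- Binary entropy function (base 2). -/
noncomputable def binH (x : ℝ) : ℝ := -x * Real.logb 2 x - (1 - x) * Real.logb 2 (1 - x)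

/-! The nodes of a subtree occupy a block of consecutive preorder indices. So the nodes of `μ` are
a block with the blocks of the (at most two) pruned subtrees cut out, which leaves at most three
blocks. -/

/-- `μ` is laid over `s` from the root; its nodes get their preorder indices in `s`, shifted by `o`. -/
def preorderSet (o : ℕ) (s μ : BinTree) : Set ℕ :=
  {i | ∃ (pos : List Bool) (u : BinTree),
      subAt μ pos = some u ∧ u ≠ BinTree.leaf ∧ i = o + preorderIdx s pos}

def unionIcc (L : List (ℕ × ℕ)) : Set ℕ := ⋃ p ∈ L, Set.Icc p.1 p.2

lemma unionIcc_append (L M : List (ℕ × ℕ)) : unionIcc (L ++ M) = unionIcc L ∪ unionIcc M := by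
  simp only [unionIcc, List.mem_append, Set.iUnion_or, Set.iUnion_union_distrib]

lemma exists_preorderIdx_append_eq_add {t s : BinTree} {q : List Bool}
    (hq : subAt t q = some s) : ∃ o, ∀ pos, preorderIdx t (q ++ pos) = o + preorderIdx s pos := by
  induction q generalizing t with
  | nil =>
    obtain rfl : t = s := Option.some.inj (by rw [← hq, subAt])
    exact ⟨0, fun pos => (zero_add _).symm⟩
  | cons b q ih =>
    cases t with
    | leaf => cases hq
    | node l r =>
      cases b with
      | false =>
        obtain ⟨o, ho⟩ := ih hq
        exact ⟨1 + o, fun pos => by simp only [List.cons_append, preorderIdx, ho]; omega⟩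
      | true =>
        obtain ⟨o, ho⟩ := ih hq
        exact ⟨1 + l.size + o, fun pos => by simp only [List.cons_append, preorderIdx, ho]; omega⟩

lemma preorderSet_leaf (o : ℕ) (s : BinTree) : preorderSet o s .leaf = ∅ := by
  refine Set.eq_empty_of_forall_notMem ?_
  rintro i ⟨pos, u, hu, hne, -⟩
  cases pos with
  | nil => exact hne (Option.some.inj (by rw [← hu, subAt])).symm
  | cons b p => cases hu

lemma preorderSet_node (o : ℕ) (l r l' r' : BinTree) :
    preorderSet o (.node l r) (.node l' r') =
      insert (o + 1) (preorderSet (o + 1) l l' ∪ preorderSet (o + 1 + l.size) r r') := by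
  ext i
  constructor
  · rintro ⟨_ | ⟨_ | _, p⟩, u, hu, hne, rfl⟩
    · exact Or.inl rfl
    · exact Or.inr (Or.inl ⟨p, u, hu, hne, by simp only [preorderIdx]; omega⟩)
    · exact Or.inr (Or.inr ⟨p, u, hu, hne, by simp only [preorderIdx]; omega⟩)
  · rintro (rfl | ⟨p, u, hu, hne, rfl⟩ | ⟨p, u, hu, hne, rfl⟩)
    · exact ⟨[], .node l' r', rfl, BinTree.noConfusion, rfl⟩
    · exact ⟨false :: p, u, hu, hne, by simp only [preorderIdx]; omega⟩
    · exact ⟨true :: p, u, hu, hne, by simp only [preorderIdx]; omega⟩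

lemma insert_Icc_diff_union_Icc_diff {a m n : ℕ} {U V : Set ℕ}
    (hU : U ⊆ Set.Icc (a + 1) (a + m)) (hV : V ⊆ Set.Icc (a + m + 1) (a + m + n)) :
    insert a ((Set.Icc (a + 1) (a + m) \ U) ∪ (Set.Icc (a + m + 1) (a + m + n) \ V)) =
      Set.Icc a (a + m + n) \ (U ∪ V) := by
  ext i
  have hUi : i ∈ U → a + 1 ≤ i ∧ i ≤ a + m := @hU i
  have hVi : i ∈ V → a + m + 1 ≤ i ∧ i ≤ a + m + n := @hV i
  simp only [Set.mem_insert_iff, Set.mem_union, Set.mem_sdiff, Set.mem_Icc]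
  grind

lemma preorderSet_self (o : ℕ) (s : BinTree) :
    preorderSet o s s = Set.Icc (o + 1) (o + s.size) := by
  induction s generalizing o with
  | leaf =>
    rw [preorderSet_leaf, BinTree.size, add_zero, Set.Icc_eq_empty (by omega)]
  | node l r ihl ihr =>
    rw [preorderSet_node, ihl, ihr]
    ext i
    simp only [Set.mem_insert_iff, Set.mem_union, Set.mem_Icc, BinTree.size]
    omega

lemma exists_Icc_diff_union_Icc_eq (a b x₁ y₁ x₂ y₂ : ℕ) (ha : 0 < a) :
    ∃ a₁ b₁ a₂ b₂ a₃ b₃ : ℕ, Set.Icc a b \ (Set.Icc x₁ y₁ ∪ Set.Icc x₂ y₂) =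
      Set.Icc a₁ b₁ ∪ Set.Icc a₂ b₂ ∪ Set.Icc a₃ b₃ := by
  wlog hx : x₁ ≤ x₂ generalizing x₁ y₁ x₂ y₂
  · rw [Set.union_comm]
    exact this x₂ y₂ x₁ y₁ (le_of_not_ge hx)
  refine ⟨a, min b (x₁ - 1), max a (y₁ + 1), min b (x₂ - 1), max a (max y₁ y₂ + 1), b, ?_⟩
  ext i
  simp only [Set.mem_sdiff, Set.mem_union, Set.mem_Icc]
  omega

lemma exists_unionIcc_eq_union_Icc {L : List (ℕ × ℕ)} (hL : L.length ≤ 2) :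
    ∃ x₁ y₁ x₂ y₂ : ℕ, unionIcc L = Set.Icc x₁ y₁ ∪ Set.Icc x₂ y₂ := by
  match L, hL with
  | [], _ => exact ⟨1, 0, 1, 0, by simp [unionIcc]⟩
  | [p], _ => exact ⟨p.1, p.2, p.1, p.2, by simp [unionIcc]⟩
  | [p, q], _ => exact ⟨p.1, p.2, q.1, q.2, by simp [unionIcc]⟩

lemma PrunedN.preorderSet_eq {k : ℕ} {μ s : BinTree} (h : PrunedN k μ s) (o : ℕ) :
    ∃ L : List (ℕ × ℕ), L.length = k ∧ unionIcc L ⊆ Set.Icc (o + 1) (o + s.size) ∧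
      preorderSet o s μ = Set.Icc (o + 1) (o + s.size) \ unionIcc L := by
  induction h generalizing o with
  | refl t => exact ⟨[], rfl, by simp [unionIcc], by simp [unionIcc, preorderSet_self]⟩
  | prune l r =>
    exact ⟨[(o + 1, o + (BinTree.node l r).size)], rfl, by simp [unionIcc],
      by simp [unionIcc, preorderSet_leaf]⟩
  | @node a b l' r' l r _ _ ihl ihr =>
    obtain ⟨La, rfl, hLa, hl⟩ := ihl (o + 1)
    obtain ⟨Lb, rfl, hLb, hr⟩ := ihr (o + 1 + l.size)
    have hsize : o + (BinTree.node l r).size = o + 1 + l.size + r.size := by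
      simp only [BinTree.size]; omega
    refine ⟨La ++ Lb, List.length_append, ?_, ?_⟩
    · rw [unionIcc_append, hsize]
      exact Set.union_subset (hLa.trans (Set.Icc_subset_Icc (by omega) (by omega)))
        (hLb.trans (Set.Icc_subset_Icc (by omega) le_rfl))
    · rw [preorderSet_node, hl, hr, unionIcc_append, hsize]
      exact insert_Icc_diff_union_Icc_diff hLa hLb

/-- If `μ` is obtained from the rooted subtree `s` of `t` (located at position
`q` in `t`) by pruning at most two subtrees, then the preorder indices (in `t`)
of the nodes of `μ` form a union of at most three intervals of consecutive
integers. -/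
theorem stmt17 (t s μ : BinTree) (q : List Bool) (k : ℕ)
    (hq : subAt t q = some s) (hpr : PrunedN k μ s) (hk : k ≤ 2) :
    ∃ a1 b1 a2 b2 a3 b3 : ℕ,
      {i : ℕ | ∃ (pos : List Bool) (u : BinTree),
          subAt μ pos = some u ∧ u ≠ BinTree.leaf ∧ i = preorderIdx t (q ++ pos)}
        = Set.Icc a1 b1 ∪ Set.Icc a2 b2 ∪ Set.Icc a3 b3 := by
  obtain ⟨o, ho⟩ := exists_preorderIdx_append_eq_add hq
  obtain ⟨L, rfl, -, hμ⟩ := hpr.preorderSet_eq o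
  obtain ⟨x₁, y₁, x₂, y₂, hL⟩ := exists_unionIcc_eq_union_Icc hk
  have hset : {i : ℕ | ∃ (pos : List Bool) (u : BinTree),
      subAt μ pos = some u ∧ u ≠ BinTree.leaf ∧ i = preorderIdx t (q ++ pos)} =
        preorderSet o s μ := by
    simp only [ho]
    rfl
  rw [hset, hμ, hL]
  exact exists_Icc_diff_union_Icc_eq _ _ _ _ _ _ o.succ_pos
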